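/- arXiv:1308.5728 — 6 statements merged into one kernel-verified Lean document; each statement's English description precedes it below -/
import Mathlib

section
/- Let n, m be positive integers and let F_a ∈ ℂ^{n×n}, G_a ∈ ℂ^{n×m}, H_a ∈ ℂ^{m×n}. Suppose there exists a Hermitian positive definite matrix Θ ∈ ℂ^{n×n} such that F_aΘ + ΘF_a† + G_aG_a† = 0 and G_a = −ΘH_a†. Let L ∈ ℂ^{q×m} be any matrix such that LL† is invertible. Then Q := Θ is a positive semidefinite solution of the Kalman filter Riccati equation F_aQ + QF_a† + G_aG_a† − (G_a + QH_a†)L†(LL†)^{−1}(G_a + QH_a†)† = 0, and the corresponding Kalman gain K_g := (G_a + QH_a†)L†(LL†)^{−1} equals the zero matrix. (Consequently the Kalman filter dynamics for a physically realizable annihilation-operator quantum system are independent of the measured output; this is the core of Theorem 5 and Corollary 1 of the paper.) -/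
open Matrix ComplexOrder

theorem kalman_gain_zero_of_physically_realizable_general
    (n m q : ℕ)
    (Fa : Matrix (Fin n) (Fin n) ℂ)
    (Ga : Matrix (Fin n) (Fin m) ℂ)
    (Ha : Matrix (Fin m) (Fin n) ℂ)
    (Θ : Matrix (Fin n) (Fin n) ℂ)
    (hΘ : Θ.PosDef)
    (hRic : Fa * Θ + Θ * Faᴴ + Ga * Gaᴴ = 0)
    (hG : Ga = -(Θ * Haᴴ))
    (L : Matrix (Fin q) (Fin m) ℂ) :
    Θ.PosSemidef ∧
    Fa * Θ + Θ * Faᴴ + Ga * Gaᴴ -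
      ((Ga + Θ * Haᴴ) * Lᴴ) * (L * Lᴴ)⁻¹ * ((Ga + Θ * Haᴴ) * Lᴴ)ᴴ = 0 ∧
    (Ga + Θ * Haᴴ) * Lᴴ * (L * Lᴴ)⁻¹ = 0 := by
  have hcross : Ga + Θ * Haᴴ = 0 := by rw [hG, neg_add_cancel]
  refine ⟨hΘ.posSemidef, ?_, ?_⟩
  · simp [hcross, hRic]
  · simp [hcross]

/-- For a physically realizable annihilation-operator quantum system
(conditions `F_aΘ + ΘF_a† + G_aG_a† = 0` and `G_a = −ΘH_a†` with `Θ` Hermitian positive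
definite), the matrix `Q := Θ` is a positive semidefinite solution of the Kalman filter
Riccati equation, and the corresponding Kalman gain
`K_g = (G_a + QH_a†)L†(LL†)⁻¹` is zero. -/
theorem kalman_gain_zero_of_physically_realizable
    (n m q : ℕ) (hn : 0 < n) (hm : 0 < m)
    (Fa : Matrix (Fin n) (Fin n) ℂ)
    (Ga : Matrix (Fin n) (Fin m) ℂ)
    (Ha : Matrix (Fin m) (Fin n) ℂ)
    (Θ : Matrix (Fin n) (Fin n) ℂ)
    (hΘ : Θ.PosDef)
    (hRic : Fa * Θ + Θ * Faᴴ + Ga * Gaᴴ = 0)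
    (hG : Ga = -(Θ * Haᴴ))
    (L : Matrix (Fin q) (Fin m) ℂ)
    (hL : IsUnit (L * Lᴴ)) :
    Θ.PosSemidef ∧
    Fa * Θ + Θ * Faᴴ + Ga * Gaᴴ -
      ((Ga + Θ * Haᴴ) * Lᴴ) * (L * Lᴴ)⁻¹ * ((Ga + Θ * Haᴴ) * Lᴴ)ᴴ = 0 ∧
    (Ga + Θ * Haᴴ) * Lᴴ * (L * Lᴴ)⁻¹ = 0 :=
  kalman_gain_zero_of_physically_realizable_general n m q Fa Ga Ha Θ hΘ hRic hG L
end

section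
/- Let F ∈ ℂ^{n×n}, G_w ∈ ℂ^{n×m_w}, G_u ∈ ℂ^{n×m_u}, H ∈ ℂ^{m_w×n}, H̃ ∈ ℂ^{m_u×n}, and suppose there exists a Hermitian positive definite Θ_p ∈ ℂ^{n×n} with FΘ_p + Θ_pF† + G_wG_w† + G_uG_u† = 0, G_w = −Θ_pH†, and G_u = −Θ_pH̃† (a physically realizable plant). Let F_c ∈ ℂ^{n_c×n_c}, G_cw ∈ ℂ^{n_c×m_u}, G_cy ∈ ℂ^{n_c×m_w}, H_c ∈ ℂ^{m_u×n_c}, H̃_c ∈ ℂ^{m_w×n_c}, and suppose there exists a Hermitian positive definite Θ_c ∈ ℂ^{n_c×n_c} with F_cΘ_c + Θ_cF_c† + G_cwG_cw† + G_cyG_cy† = 0, G_cw = −Θ_cH_c†, and G_cy = −Θ_cH̃_c† (a physically realizable coherent controller). Define the closed-loop matrices F_cl = [[F, G_uH_c],[G_cyH, F_c]], G_cl = [[G_w, G_u],[G_cy, G_cw]], H_cl = [[H, H̃_c],[H̃, H_c]]. Then the block diagonal matrix Θ_cl = diag(Θ_p, Θ_c) is Hermitian positive definite and satisfies F_clΘ_cl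 + Θ_clF_cl† + G_clG_cl† = 0 and G_cl = −Θ_clH_cl†; that is, the closed-loop system (F_cl, G_cl, H_cl, I) is physically realizable. -/
/-!
`Θ_cl = diag(Θ_p, Θ_c)` is positive definite because its quadratic form splits into those of
`Θ_p` and `Θ_c`. The diagonal blocks of the closed-loop Lyapunov equation are the plant's and the
controller's equations. In each off-diagonal block the coupling terms cancel the noise cross terms,
since `G = -Θ H†` with `Θ` Hermitian gives `H Θ = -G†`. The relation `G_cl = -Θ_cl H_cl†` holds
blockwise.
-/

open Matrix ComplexOrder

namespace Matrix

variable {R : Type*} {l m n o : Type*}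

theorem PosDef.fromBlocks_zero_zero [Ring R] [PartialOrder R] [StarRing R] [AddLeftMono R]
    [Fintype m] [Fintype n] {A : Matrix m m R} {D : Matrix n n R} (hA : A.PosDef) (hD : D.PosDef) :
    (fromBlocks A 0 0 D).PosDef := by
  refine .of_dotProduct_mulVec_pos (hA.1.fromBlocks conjTranspose_zero hD.1) fun x hx => ?_
  have hsplit : star x ⬝ᵥ fromBlocks A 0 0 D *ᵥ x =
      star (x ∘ Sum.inl) ⬝ᵥ A *ᵥ (x ∘ Sum.inl) + star (x ∘ Sum.inr) ⬝ᵥ D *ᵥ (x ∘ Sum.inr) := by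
    simp [fromBlocks_mulVec, dotProduct, Fintype.sum_sum_type]
  rw [hsplit]
  by_cases hl : x ∘ Sum.inl = 0
  · have hr : x ∘ Sum.inr ≠ 0 := fun hr =>
      hx (by rw [← Sum.elim_comp_inl_inr x, hl, hr]; exact Sum.elim_zero_zero)
    simpa [hl] using hD.dotProduct_mulVec_pos hr
  · exact add_pos_of_pos_of_nonneg (hA.dotProduct_mulVec_pos hl)
      (hD.posSemidef.dotProduct_mulVec_nonneg _)

theorem conjTranspose_eq_neg_mul_of_eq_neg_mul [Ring R] [StarRing R] [Fintype n]
    {Θ : Matrix n n R} {G : Matrix n m R} {K : Matrix m n R}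
    (hΘ : Θ.IsHermitian) (hG : G = -(Θ * Kᴴ)) : Gᴴ = -(K * Θ) := by
  rw [hG, conjTranspose_neg, conjTranspose_mul, conjTranspose_conjTranspose, hΘ.eq]

theorem lyapunov_cross_term_eq_zero [Ring R] [StarRing R]
    [Fintype l] [Fintype m] [Fintype n] [Fintype o]
    {Θ₁ : Matrix l l R} {G₁ : Matrix l m R} {K₁ : Matrix m l R}
    {Θ₂ : Matrix n n R} {G₂ : Matrix n o R} {K₂ : Matrix o n R}
    (hΘ₂ : Θ₂.IsHermitian) (hG₁ : G₁ = -(Θ₁ * K₁ᴴ)) (hG₂ : G₂ = -(Θ₂ * K₂ᴴ))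
    (A : Matrix l o R) (B : Matrix n m R) :
    A * K₂ * Θ₂ + Θ₁ * (B * K₁)ᴴ + (G₁ * Bᴴ + A * G₂ᴴ) = 0 := by
  rw [conjTranspose_eq_neg_mul_of_eq_neg_mul hΘ₂ hG₂, hG₁, conjTranspose_mul]
  simp only [Matrix.mul_assoc, Matrix.neg_mul, Matrix.mul_neg]
  abel

end Matrix

/-- The interconnection of a physically realizable annihilation-operator plant
with a physically realizable coherent controller is again physically realizable, with
commutation matrix `Θ_cl = diag(Θ_p, Θ_c)`. -/
theorem closed_loop_physically_realizable
    (n nc mw mu : ℕ)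
    (F : Matrix (Fin n) (Fin n) ℂ)
    (Gw : Matrix (Fin n) (Fin mw) ℂ)
    (Gu : Matrix (Fin n) (Fin mu) ℂ)
    (H : Matrix (Fin mw) (Fin n) ℂ)
    (Ht : Matrix (Fin mu) (Fin n) ℂ)
    (Θp : Matrix (Fin n) (Fin n) ℂ)
    (hΘp : Θp.PosDef)
    (hpRic : F * Θp + Θp * Fᴴ + Gw * Gwᴴ + Gu * Guᴴ = 0)
    (hGw : Gw = -(Θp * Hᴴ))
    (hGu : Gu = -(Θp * Htᴴ))
    (Fc : Matrix (Fin nc) (Fin nc) ℂ)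
    (Gcw : Matrix (Fin nc) (Fin mu) ℂ)
    (Gcy : Matrix (Fin nc) (Fin mw) ℂ)
    (Hc : Matrix (Fin mu) (Fin nc) ℂ)
    (Htc : Matrix (Fin mw) (Fin nc) ℂ)
    (Θc : Matrix (Fin nc) (Fin nc) ℂ)
    (hΘc : Θc.PosDef)
    (hcRic : Fc * Θc + Θc * Fcᴴ + Gcw * Gcwᴴ + Gcy * Gcyᴴ = 0)
    (hGcw : Gcw = -(Θc * Hcᴴ))
    (hGcy : Gcy = -(Θc * Htcᴴ)) :
    (fromBlocks Θp 0 0 Θc).PosDef ∧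
    (fromBlocks F (Gu * Hc) (Gcy * H) Fc) * (fromBlocks Θp 0 0 Θc) +
      (fromBlocks Θp 0 0 Θc) * (fromBlocks F (Gu * Hc) (Gcy * H) Fc)ᴴ +
      (fromBlocks Gw Gu Gcy Gcw) * (fromBlocks Gw Gu Gcy Gcw)ᴴ = 0 ∧
    (fromBlocks Gw Gu Gcy Gcw) =
      -((fromBlocks Θp 0 0 Θc) * (fromBlocks H Htc Ht Hc)ᴴ) := by
  refine ⟨hΘp.fromBlocks_zero_zero hΘc, ?_, ?_⟩
  · simp only [fromBlocks_conjTranspose, fromBlocks_multiply, fromBlocks_add, Matrix.mul_zero,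
      Matrix.zero_mul, add_zero, zero_add]
    rw [← fromBlocks_zero, fromBlocks_inj]
    exact ⟨by rw [← hpRic]; abel,
      lyapunov_cross_term_eq_zero hΘc.1 hGw hGcw Gu Gcy,
      by rw [add_comm (Gcy * Gwᴴ)]; exact lyapunov_cross_term_eq_zero hΘp.1 hGcw hGw Gcy Gu,
      by rw [← hcRic]; abel⟩
  · simp only [fromBlocks_conjTranspose, fromBlocks_multiply, Matrix.zero_mul, add_zero, zero_add,
      fromBlocks_neg]
    rw [← hGw, ← hGu, ← hGcy, ← hGcw]
end

section
/- Let F ∈ ℂ^{n×n}, G ∈ ℂ^{n×m}, H ∈ ℂ^{m×n}, and suppose there exists a Hermitian positive definite matrix Θ ∈ ℂ^{n×n} such that FΘ + ΘF† + GG† = 0 and G = −ΘH†. Define Γ(s) := H(sI − F)^{−1}G + I. Let L ∈ ℂ^{q×m} satisfy LL† = I. Then for every ω ∈ ℝ such that iωI − F is invertible, the matrix Γ_Z(iω) := LΓ(iω) satisfies Γ_Z(iω)Γ_Z(iω)† = I. (This establishes that the trivial controller dU = dW̃ applied to a physically realizable annihilation-operator plant with a physical cost output gives a closed-loop transfer function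 of H^∞ norm equal to 1.) -/
open Matrix ComplexOrder

/-!
Set `A = iωI − F`. Since `iω` is purely imaginary, the Lyapunov equation becomes
`AΘ + ΘA† = GG†`; sandwiching it between `A⁻¹` and `A⁻†` gives `A⁻¹GG†A⁻† = ΘA⁻† + A⁻¹Θ`.
With `HΘ = −G†` (from `G = −ΘH†` and `Θ = Θ†`), the quadratic term `HA⁻¹GG†A⁻†H†` of `ΓΓ†`
therefore cancels its two cross terms, and `LL† = I` carries `ΓΓ† = I` over to `LΓ`.
-/

namespace Matrix

variable {R : Type*} [CommRing R] [StarRing R]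
variable {m n : Type*} [Fintype m] [DecidableEq m] [Fintype n] [DecidableEq n]

theorem smul_one_sub_lyapunov {s : R} (hs : star s = -s) (F Θ : Matrix n n R) :
    (s • 1 - F) * Θ + Θ * (s • 1 - F)ᴴ = -(F * Θ + Θ * Fᴴ) := by
  rw [conjTranspose_sub, conjTranspose_smul, conjTranspose_one, hs, sub_mul, mul_sub,
    Matrix.smul_mul, Matrix.mul_smul, Matrix.one_mul, Matrix.mul_one, neg_smul]
  abel

theorem mul_conjTranspose_eq_one_of_lyapunov {A B Θ : Matrix n n R} {G : Matrix n m R}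
    {H : Matrix m n R} (hBA : B * A = 1) (hΘ : Θᴴ = Θ) (hLyap : A * Θ + Θ * Aᴴ = G * Gᴴ)
    (hG : G = -(Θ * Hᴴ)) :
    (H * B * G + 1) * (H * B * G + 1)ᴴ = 1 := by
  have hAB : Aᴴ * Bᴴ = 1 := by rw [← conjTranspose_mul, hBA, conjTranspose_one]
  have hΘH : Θ * Hᴴ = -G := by rw [hG, neg_neg]
  have hHΘ : H * Θ = -Gᴴ := by
    rw [hG, conjTranspose_neg, conjTranspose_mul, hΘ, conjTranspose_conjTranspose, neg_neg]
  have hsandwich : B * (G * Gᴴ) * Bᴴ = Θ * Bᴴ + B * Θ := by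
    rw [← hLyap, mul_add, add_mul, ← Matrix.mul_assoc B A, hBA, one_mul,
      Matrix.mul_assoc B, Matrix.mul_assoc Θ, hAB, mul_one, add_comm]
  calc (H * B * G + 1) * (H * B * G + 1)ᴴ
      = H * (B * (G * Gᴴ) * Bᴴ) * Hᴴ + H * B * G + Gᴴ * Bᴴ * Hᴴ + 1 := by
        simp only [conjTranspose_add, conjTranspose_mul, conjTranspose_one, add_mul, mul_add,
          one_mul, mul_one, Matrix.mul_assoc]
        abel
    _ = H * Θ * (Bᴴ * Hᴴ) + H * B * (Θ * Hᴴ) + H * B * G + Gᴴ * Bᴴ * Hᴴ + 1 := by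
        rw [hsandwich]
        simp only [Matrix.mul_add, Matrix.add_mul, Matrix.mul_assoc]
    _ = 1 := by
        rw [hHΘ, hΘH]
        simp only [Matrix.neg_mul, Matrix.mul_neg, Matrix.mul_assoc]
        abel

theorem mul_mul_conjTranspose_eq_one {l : Type*} [DecidableEq l] {L : Matrix l m R}
    {T : Matrix m m R}
    (hL : L * Lᴴ = 1) (hT : T * Tᴴ = 1) : (L * T) * (L * T)ᴴ = 1 := by
  rw [conjTranspose_mul, Matrix.mul_assoc, ← Matrix.mul_assoc T, hT, Matrix.one_mul, hL]

end Matrix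

/-- For a physically realizable annihilation-operator plant
(`FΘ + ΘF† + GG† = 0`, `G = −ΘH†` with `Θ` Hermitian positive definite), the cost transfer
function `Γ_Z(iω) = L(H(iωI − F)⁻¹G + I)` with `LL† = I` satisfies
`Γ_Z(iω)Γ_Z(iω)† = I` at every frequency `ω` where it is defined. -/
theorem trivial_controller_allpass
    (n m q : ℕ)
    (F : Matrix (Fin n) (Fin n) ℂ)
    (G : Matrix (Fin n) (Fin m) ℂ)
    (H : Matrix (Fin m) (Fin n) ℂ)
    (Θ : Matrix (Fin n) (Fin n) ℂ)
    (hΘ : Θ.PosDef)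
    (hRic : F * Θ + Θ * Fᴴ + G * Gᴴ = 0)
    (hG : G = -(Θ * Hᴴ))
    (L : Matrix (Fin q) (Fin m) ℂ)
    (hL : L * Lᴴ = 1) :
    ∀ ω : ℝ, IsUnit ((Complex.I * (ω : ℂ)) • (1 : Matrix (Fin n) (Fin n) ℂ) - F) →
      (L * (H * ((Complex.I * (ω : ℂ)) • (1 : Matrix (Fin n) (Fin n) ℂ) - F)⁻¹ * G + 1)) *
      (L * (H * ((Complex.I * (ω : ℂ)) • (1 : Matrix (Fin n) (Fin n) ℂ) - F)⁻¹ * G + 1))ᴴ = 1 := by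
  intro ω hA
  have hstar : star (Complex.I * ω) = -(Complex.I * ω) := by simp
  have hLyap := smul_one_sub_lyapunov hstar F Θ
  rw [← eq_neg_of_add_eq_zero_right hRic] at hLyap
  have hinv := nonsing_inv_mul _ ((isUnit_iff_isUnit_det _).mp hA)
  exact mul_mul_conjTranspose_eq_one hL (mul_conjTranspose_eq_one_of_lyapunov hinv hΘ.1 hLyap hG)
end

section
/- Let n, m be positive integers and let F = Δ(F₁,F₂) ∈ ℂ^{2n×2n}, G = Δ(G₁,G₂) ∈ ℂ^{2n×2m}, H = Δ(H₁,H₂) ∈ ℂ^{2m×2n}, K = Δ(K₁,K₂) ∈ ℂ^{2m×2m}. Then the following are equivalent: (i) there exist an invertible matrix T = Δ(T₁,T₂) ∈ ℂ^{2n×2n}, a Hermitian matrix M = Δ(M₁,M₂) ∈ ℂ^{2n×2n}, and a matrix N = Δ(N₁,N₂) ∈ ℂ^{2m×2n} such that, setting Θ := T J_n T†, one has F = −iΘM − (1/2)ΘN†J_mN, G = −ΘN†J_m, H = N, and K = I; (ii) there exists a Hermitian matrix Θ ∈ ℂ^{2n×2n} of the form Θ = T J_n T† with T = Δ(T₁,T₂)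 invertible, such that FΘ + ΘF† + GJ_mG† = 0, G = −ΘH†J_m, and K = I. (Theorem 1 of the paper.) -/
open Matrix

/-- `Δ(A,B) = [[A, B],[conj B, conj A]]` where `conj` is entrywise complex conjugation. -/
def deltaM {n m : ℕ} (A B : Matrix (Fin n) (Fin m) ℂ) :
    Matrix (Fin n ⊕ Fin n) (Fin m ⊕ Fin m) ℂ :=
  fromBlocks A B (B.map (starRingEnd ℂ)) (A.map (starRingEnd ℂ))

/-- `J_k = [[I, 0],[0, −I]]`. -/
def Jmat (k : ℕ) : Matrix (Fin k ⊕ Fin k) (Fin k ⊕ Fin k) ℂ :=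
  fromBlocks 1 0 0 (-1)

/-!
Under `G = −ΘH†J` the Riccati expression `FΘ + ΘF† + GJG†` equals `XΘ + ΘX†` with
`X = F − ½GH`. A realization gives `X = −iΘM` with `Θ`, `M` Hermitian, which makes
`XΘ + ΘX†` vanish. Conversely `Θ = TJT†` is invertible, so `M := iΘ⁻¹X` recovers `F`, and it is
Hermitian precisely because `XΘ + ΘX† = 0`. It has `Δ`-form because the swap-conjugation
`X ↦ ΣX̄Σ` fixes `Δ`-form matrices and negates `J`, hence negates `Θ` and `Θ⁻¹` while fixing `X`.
-/

section SwapConj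

variable {α β γ : Type*}

/-- `Σ X̄ Σ`, where `Σ` swaps the two summands: the `Δ`-form matrices are its fixed points. -/
def swapConj (X : Matrix (α ⊕ α) (β ⊕ β) ℂ) : Matrix (α ⊕ α) (β ⊕ β) ℂ :=
  (X.map (starRingEnd ℂ)).submatrix (Equiv.sumComm α α) (Equiv.sumComm β β)

lemma swapConj_apply (X : Matrix (α ⊕ α) (β ⊕ β) ℂ) (i : α ⊕ α) (j : β ⊕ β) :
    swapConj X i j = starRingEnd ℂ (X i.swap j.swap) := rfl

lemma swapConj_mul [Fintype β] (X : Matrix (α ⊕ α) (β ⊕ β) ℂ) (Y : Matrix (β ⊕ β) (γ ⊕ γ) ℂ) :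
    swapConj (X * Y) = swapConj X * swapConj Y := by
  rw [swapConj, swapConj, swapConj, Matrix.map_mul, submatrix_mul_equiv]

lemma swapConj_sub (X Y : Matrix (α ⊕ α) (β ⊕ β) ℂ) :
    swapConj (X - Y) = swapConj X - swapConj Y := by
  ext i j
  simp [swapConj_apply]

lemma swapConj_smul (c : ℂ) (X : Matrix (α ⊕ α) (β ⊕ β) ℂ) :
    swapConj (c • X) = starRingEnd ℂ c • swapConj X := by
  ext i j
  simp [swapConj_apply]

lemma swapConj_conjTranspose (X : Matrix (α ⊕ α) (β ⊕ β) ℂ) :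
    swapConj Xᴴ = (swapConj X)ᴴ := by
  ext i j
  simp [swapConj_apply]

lemma swapConj_one [DecidableEq α] : swapConj (1 : Matrix (α ⊕ α) (α ⊕ α) ℂ) = 1 := by
  rw [swapConj, Matrix.map_one _ (map_zero _) (map_one _), submatrix_one_equiv]

lemma swapConj_nonsing_inv [Fintype α] [DecidableEq α] {A : Matrix (α ⊕ α) (α ⊕ α) ℂ}
    (hA : IsUnit A) : swapConj A⁻¹ = (swapConj A)⁻¹ := by
  refine (inv_eq_left_inv ?_).symm
  rw [← swapConj_mul, nonsing_inv_mul _ ((isUnit_iff_isUnit_det A).mp hA), swapConj_one]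

lemma swapConj_deltaM {p q : ℕ} (A B : Matrix (Fin p) (Fin q) ℂ) :
    swapConj (deltaM A B) = deltaM A B := by
  ext (i | i) (j | j) <;> simp [swapConj_apply, deltaM]

lemma exists_deltaM_of_swapConj_eq {p q : ℕ} {X : Matrix (Fin p ⊕ Fin p) (Fin q ⊕ Fin q) ℂ}
    (hX : swapConj X = X) : ∃ A B, X = deltaM A B := by
  refine ⟨X.toBlocks₁₁, X.toBlocks₁₂, ?_⟩
  ext (i | i) (j | j)
  · rfl
  · rfl
  · simpa [swapConj_apply, deltaM, toBlocks₁₂] using (congrFun₂ hX (.inr i) (.inl j)).symm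
  · simpa [swapConj_apply, deltaM, toBlocks₁₁] using (congrFun₂ hX (.inr i) (.inr j)).symm

lemma swapConj_Jmat (k : ℕ) : swapConj (Jmat k) = -Jmat k := by
  ext (i | i) (j | j) <;> simp [swapConj_apply, Jmat, one_apply, apply_ite]

lemma swapConj_deltaM_mul_Jmat_mul_conjTranspose {n : ℕ} (T₁ T₂ : Matrix (Fin n) (Fin n) ℂ) :
    swapConj (deltaM T₁ T₂ * Jmat n * (deltaM T₁ T₂)ᴴ) =
      -(deltaM T₁ T₂ * Jmat n * (deltaM T₁ T₂)ᴴ) := by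
  rw [swapConj_mul, swapConj_mul, swapConj_conjTranspose, swapConj_deltaM, swapConj_Jmat,
    Matrix.mul_neg, Matrix.neg_mul]

lemma swapConj_I_smul_inv_mul [Fintype α] [DecidableEq α] {Θ X : Matrix (α ⊕ α) (α ⊕ α) ℂ}
    (hΘ : IsUnit Θ) (hΘswap : swapConj Θ = -Θ) (hX : swapConj X = X) :
    swapConj (Complex.I • (Θ⁻¹ * X)) = Complex.I • (Θ⁻¹ * X) := by
  have hinv_neg : (-Θ)⁻¹ = -Θ⁻¹ :=
    inv_eq_left_inv (by rw [neg_mul_neg, nonsing_inv_mul _ ((isUnit_iff_isUnit_det Θ).mp hΘ)])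
  rw [swapConj_smul, swapConj_mul, swapConj_nonsing_inv hΘ, hΘswap, hX, hinv_neg, Complex.conj_I,
    Matrix.neg_mul, smul_neg, neg_smul, neg_neg]

end SwapConj

lemma conjTranspose_Jmat (k : ℕ) : (Jmat k)ᴴ = Jmat k := by
  simp [Jmat, fromBlocks_conjTranspose]

lemma Jmat_mul_Jmat (k : ℕ) : Jmat k * Jmat k = 1 := by
  simp [Jmat, fromBlocks_multiply, ← fromBlocks_one]

section Riccati

variable {ι κ : Type*} [Fintype ι] [Fintype κ] {Θ F X : Matrix ι ι ℂ} {G : Matrix ι κ ℂ}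
  {H : Matrix κ ι ℂ} {J : Matrix κ κ ℂ}

lemma riccati_eq_of_eq_neg_mul_conjTranspose_mul [DecidableEq κ] (hΘ : Θ.IsHermitian)
    (hJ : J.IsHermitian) (hJJ : J * J = 1) (hG : G = -(Θ * Hᴴ * J)) :
    F * Θ + Θ * Fᴴ + G * J * Gᴴ =
      (F - (1 / 2 : ℂ) • (G * H)) * Θ + Θ * (F - (1 / 2 : ℂ) • (G * H))ᴴ := by
  have hGJG : G * J * Gᴴ = Θ * Hᴴ * J * H * Θ := by
    simp only [hG, conjTranspose_neg, conjTranspose_mul, hΘ.eq, hJ.eq, conjTranspose_conjTranspose,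
      Matrix.neg_mul, Matrix.mul_neg, neg_neg, Matrix.mul_assoc]
    rw [← Matrix.mul_assoc J J, hJJ, Matrix.one_mul]
  rw [hGJG, hG]
  simp only [conjTranspose_sub, conjTranspose_smul, conjTranspose_neg, conjTranspose_mul, hΘ.eq,
    hJ.eq, conjTranspose_conjTranspose, Matrix.sub_mul, Matrix.mul_sub, Matrix.smul_mul,
    Matrix.mul_smul, Matrix.neg_mul, Matrix.mul_neg, Matrix.mul_assoc, one_div, star_inv₀,
    star_ofNat]
  module

lemma sub_half_smul_mul_eq_iff (hG : G = -(Θ * Hᴴ * J)) (Y : Matrix ι ι ℂ) :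
    F - (1 / 2 : ℂ) • (G * H) = Y ↔ F = Y - (1 / 2 : ℂ) • (Θ * Hᴴ * J * H) := by
  rw [hG, Matrix.neg_mul, smul_neg, sub_neg_eq_add, ← eq_sub_iff_add_eq]

lemma neg_I_smul_mul_mul_add_mul_conjTranspose_eq_zero {M : Matrix ι ι ℂ} (hΘ : Θ.IsHermitian)
    (hM : M.IsHermitian) :
    (-Complex.I) • (Θ * M) * Θ + Θ * ((-Complex.I) • (Θ * M))ᴴ = 0 := by
  simp [conjTranspose_mul, hΘ.eq, hM.eq, Matrix.mul_assoc]

variable [DecidableEq ι]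

lemma neg_I_smul_mul_I_smul_inv_mul (hΘ : IsUnit Θ) :
    (-Complex.I) • (Θ * (Complex.I • (Θ⁻¹ * X))) = X := by
  rw [Matrix.mul_smul, ← Matrix.mul_assoc, mul_nonsing_inv _ ((isUnit_iff_isUnit_det Θ).mp hΘ),
    Matrix.one_mul, smul_smul, neg_mul, Complex.I_mul_I, neg_neg, one_smul]

lemma isHermitian_I_smul_inv_mul (hΘ : Θ.IsHermitian) (hΘu : IsUnit Θ)
    (hX : X * Θ + Θ * Xᴴ = 0) : (Complex.I • (Θ⁻¹ * X)).IsHermitian := by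
  have hdet := (isUnit_iff_isUnit_det Θ).mp hΘu
  have hXH : Xᴴ * Θ⁻¹ = -(Θ⁻¹ * X) := by
    calc Xᴴ * Θ⁻¹ = Θ⁻¹ * (Θ * Xᴴ) * Θ⁻¹ := by
          rw [← Matrix.mul_assoc, nonsing_inv_mul _ hdet, Matrix.one_mul]
      _ = Θ⁻¹ * (-(X * Θ)) * Θ⁻¹ := by rw [eq_neg_of_add_eq_zero_right hX]
      _ = -(Θ⁻¹ * X) := by
          rw [Matrix.mul_neg, Matrix.neg_mul, Matrix.mul_assoc, Matrix.mul_assoc,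
            mul_nonsing_inv _ hdet, Matrix.mul_one]
  simp [IsHermitian, conjTranspose_mul, conjTranspose_nonsing_inv, hΘ.eq, hXH]

end Riccati

theorem physical_realizability_iff_riccati_general
    (n m : ℕ)
    (F₁ F₂ : Matrix (Fin n) (Fin n) ℂ)
    (G₁ G₂ : Matrix (Fin n) (Fin m) ℂ)
    (H₁ H₂ : Matrix (Fin m) (Fin n) ℂ)
    (K₁ K₂ : Matrix (Fin m) (Fin m) ℂ) :
    (∃ (T₁ T₂ M₁ M₂ : Matrix (Fin n) (Fin n) ℂ)
        (N₁ N₂ : Matrix (Fin m) (Fin n) ℂ)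
        (Θ : Matrix (Fin n ⊕ Fin n) (Fin n ⊕ Fin n) ℂ),
        IsUnit (deltaM T₁ T₂) ∧ (deltaM M₁ M₂).IsHermitian ∧
        Θ = deltaM T₁ T₂ * Jmat n * (deltaM T₁ T₂)ᴴ ∧
        deltaM F₁ F₂ =
          (-Complex.I) • (Θ * deltaM M₁ M₂) -
            (1 / 2 : ℂ) • (Θ * (deltaM N₁ N₂)ᴴ * Jmat m * deltaM N₁ N₂) ∧
        deltaM G₁ G₂ = -(Θ * (deltaM N₁ N₂)ᴴ * Jmat m) ∧
        deltaM H₁ H₂ = deltaM N₁ N₂ ∧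
        deltaM K₁ K₂ = 1) ↔
    (∃ (Θ : Matrix (Fin n ⊕ Fin n) (Fin n ⊕ Fin n) ℂ),
        Θ.IsHermitian ∧
        (∃ T₁ T₂ : Matrix (Fin n) (Fin n) ℂ,
          IsUnit (deltaM T₁ T₂) ∧ Θ = deltaM T₁ T₂ * Jmat n * (deltaM T₁ T₂)ᴴ) ∧
        deltaM F₁ F₂ * Θ + Θ * (deltaM F₁ F₂)ᴴ +
          deltaM G₁ G₂ * Jmat m * (deltaM G₁ G₂)ᴴ = 0 ∧
        deltaM G₁ G₂ = -(Θ * (deltaM H₁ H₂)ᴴ * Jmat m) ∧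
        deltaM K₁ K₂ = 1) := by
  constructor
  · rintro ⟨T₁, T₂, M₁, M₂, N₁, N₂, Θ, hT, hM, hΘ, hF, hG, hH, hK⟩
    have hΘh : Θ.IsHermitian :=
      hΘ ▸ isHermitian_mul_mul_conjTranspose _ (conjTranspose_Jmat n)
    refine ⟨Θ, hΘh, ⟨T₁, T₂, hT, hΘ⟩, ?_, hH ▸ hG, hK⟩
    rw [riccati_eq_of_eq_neg_mul_conjTranspose_mul hΘh (conjTranspose_Jmat m) (Jmat_mul_Jmat m) hG,
      (sub_half_smul_mul_eq_iff hG _).2 hF]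
    exact neg_I_smul_mul_mul_add_mul_conjTranspose_eq_zero hΘh hM
  · rintro ⟨Θ, hΘh, ⟨T₁, T₂, hT, hΘ⟩, hR, hG, hK⟩
    set X := deltaM F₁ F₂ - (1 / 2 : ℂ) • (deltaM G₁ G₂ * deltaM H₁ H₂)
    have hΘu : IsUnit Θ := hΘ ▸ (hT.mul (IsUnit.of_mul_eq_one _ (Jmat_mul_Jmat n))).mul
      ((isUnit_conjTranspose _).2 hT)
    have hX : X * Θ + Θ * Xᴴ = 0 := by
      rwa [← riccati_eq_of_eq_neg_mul_conjTranspose_mul hΘh (conjTranspose_Jmat m)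
        (Jmat_mul_Jmat m) hG]
    have hXswap : swapConj X = X := by
      simp only [X, swapConj_sub, swapConj_smul, swapConj_mul, swapConj_deltaM, one_div, map_inv₀,
        map_ofNat]
    obtain ⟨M₁, M₂, hM⟩ := exists_deltaM_of_swapConj_eq <| swapConj_I_smul_inv_mul hΘu
      (hΘ ▸ swapConj_deltaM_mul_Jmat_mul_conjTranspose T₁ T₂) hXswap
    refine ⟨T₁, T₂, M₁, M₂, H₁, H₂, Θ, hT, hM ▸ isHermitian_I_smul_inv_mul hΘh hΘu hX, hΘ,
      ?_, hG, rfl, hK⟩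
    rw [← hM, ← sub_half_smul_mul_eq_iff hG, neg_I_smul_mul_I_smul_inv_mul hΘu]

/-- Theorem 1 of the paper: the linear quantum system
`(F, G, H, K)` with all matrices of the form `Δ(·,·)` is physically realizable
(i.e. `F = −iΘM − (1/2)ΘN†J_mN`, `G = −ΘN†J_m`, `H = N`, `K = I` for some `Θ = TJ_nT†`
with `T = Δ(T₁,T₂)` invertible, `M = Δ(M₁,M₂)` Hermitian, and `N = Δ(N₁,N₂)`)
if and only if there exists a Hermitian `Θ = TJ_nT†` (with `T = Δ(T₁,T₂)` invertible)
such that `FΘ + ΘF† + GJ_mG† = 0`, `G = −ΘH†J_m`, and `K = I`. -/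
theorem physical_realizability_iff_riccati
    (n m : ℕ) (hn : 0 < n) (hm : 0 < m)
    (F₁ F₂ : Matrix (Fin n) (Fin n) ℂ)
    (G₁ G₂ : Matrix (Fin n) (Fin m) ℂ)
    (H₁ H₂ : Matrix (Fin m) (Fin n) ℂ)
    (K₁ K₂ : Matrix (Fin m) (Fin m) ℂ) :
    (∃ (T₁ T₂ M₁ M₂ : Matrix (Fin n) (Fin n) ℂ)
        (N₁ N₂ : Matrix (Fin m) (Fin n) ℂ)
        (Θ : Matrix (Fin n ⊕ Fin n) (Fin n ⊕ Fin n) ℂ),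
        IsUnit (deltaM T₁ T₂) ∧ (deltaM M₁ M₂).IsHermitian ∧
        Θ = deltaM T₁ T₂ * Jmat n * (deltaM T₁ T₂)ᴴ ∧
        deltaM F₁ F₂ =
          (-Complex.I) • (Θ * deltaM M₁ M₂) -
            (1 / 2 : ℂ) • (Θ * (deltaM N₁ N₂)ᴴ * Jmat m * deltaM N₁ N₂) ∧
        deltaM G₁ G₂ = -(Θ * (deltaM N₁ N₂)ᴴ * Jmat m) ∧
        deltaM H₁ H₂ = deltaM N₁ N₂ ∧
        deltaM K₁ K₂ = 1) ↔
    (∃ (Θ : Matrix (Fin n ⊕ Fin n) (Fin n ⊕ Fin n) ℂ),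
        Θ.IsHermitian ∧
        (∃ T₁ T₂ : Matrix (Fin n) (Fin n) ℂ,
          IsUnit (deltaM T₁ T₂) ∧ Θ = deltaM T₁ T₂ * Jmat n * (deltaM T₁ T₂)ᴴ) ∧
        deltaM F₁ F₂ * Θ + Θ * (deltaM F₁ F₂)ᴴ +
          deltaM G₁ G₂ * Jmat m * (deltaM G₁ G₂)ᴴ = 0 ∧
        deltaM G₁ G₂ = -(Θ * (deltaM H₁ H₂)ᴴ * Jmat m) ∧
        deltaM K₁ K₂ = 1) :=
  physical_realizability_iff_riccati_general n m F₁ F₂ G₁ G₂ H₁ H₂ K₁ K₂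
end

section
/- Let F ∈ ℂ^{n×n}, G ∈ ℂ^{n×m}, H ∈ ℂ^{m×n}, and suppose there exists a Hermitian positive definite matrix Θ ∈ ℂ^{n×n} such that FΘ + ΘF† + GG† = 0 and G = −ΘH†. Define Γ(s) := H(sI − F)^{−1}G + I. Then for every s ∈ ℂ such that both sI − F and −conj(s)I − F are invertible, Γ(−conj(s))†Γ(s) = I and Γ(s)Γ(−conj(s))† = I. In particular, for every real ω such that iωI − F is invertible, Γ(iω)†Γ(iω) = I and Γ(iω)Γ(iω)† = I. -/
/-!
For every `s`, the Lyapunov equation `FΘ + ΘFᴴ + GGᴴ = 0` can be rewritten as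
`GGᴴ = (sI - F)Θ + Θ(-sI - Fᴴ)`, and `-sI - Fᴴ` is the conjugate transpose of `-s̄I - F`.
Substituting this into the cross term of `Γ(s)Γ(-s̄)ᴴ` and using `G = -ΘHᴴ` makes the two
resolvents cancel, so the cross term is `-(Γ(s) - 1) - (Γ(-s̄)ᴴ - 1)` and the product is `1`.
The other product is `1` because a one-sided inverse of a square matrix is two-sided.
-/

open Matrix ComplexOrder

namespace Matrix

variable {R n m : Type*} [CommRing R] [DecidableEq n]

theorem conjTranspose_smul_one_sub [StarRing R] (s : R) (F : Matrix n n R) :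
    (s • 1 - F)ᴴ = star s • 1 - Fᴴ := by
  rw [conjTranspose_sub, conjTranspose_smul, conjTranspose_one]

variable [Fintype n]

theorem eq_smul_one_sub_mul_add_mul_neg_smul_one_sub {F Θ F' P : Matrix n n R}
    (h : F * Θ + Θ * F' + P = 0) (s : R) :
    P = (s • 1 - F) * Θ + Θ * ((-s) • 1 - F') := by
  rw [eq_neg_of_add_eq_zero_right h, Matrix.sub_mul, Matrix.mul_sub, Matrix.smul_mul,
    Matrix.mul_smul, Matrix.one_mul, Matrix.mul_one, neg_smul]
  abel

variable [Fintype m] [DecidableEq m]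

theorem mul_add_one_mul_add_one_eq_one {N M Θ : Matrix n n R} {B : Matrix n m R}
    {B' : Matrix m n R} {C : Matrix m n R} {C' : Matrix n m R}
    (hN : IsUnit N) (hM : IsUnit M) (hBB' : B * B' = N * Θ + Θ * M)
    (hC : C * Θ = -B') (hC' : Θ * C' = -B) :
    (C * N⁻¹ * B + 1) * (B' * M⁻¹ * C' + 1) = 1 := by
  have hNN : N⁻¹ * N = 1 := nonsing_inv_mul N ((isUnit_iff_isUnit_det N).mp hN)
  have hMM : M * M⁻¹ = 1 := mul_nonsing_inv M ((isUnit_iff_isUnit_det M).mp hM)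
  have cross : C * N⁻¹ * B * (B' * M⁻¹ * C') = -(C * N⁻¹ * B) - B' * M⁻¹ * C' := by
    calc C * N⁻¹ * B * (B' * M⁻¹ * C')
        = C * N⁻¹ * (B * B') * M⁻¹ * C' := by simp only [Matrix.mul_assoc]
      _ = C * (N⁻¹ * N) * Θ * M⁻¹ * C' + C * N⁻¹ * (Θ * (M * M⁻¹) * C') := by
          rw [hBB']; simp only [Matrix.mul_add, Matrix.add_mul, Matrix.mul_assoc]
      _ = C * Θ * M⁻¹ * C' + C * N⁻¹ * (Θ * C') := by
          rw [hNN, hMM, Matrix.mul_one, Matrix.mul_one]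
      _ = -(C * N⁻¹ * B) - B' * M⁻¹ * C' := by
          rw [hC, hC', Matrix.neg_mul, Matrix.neg_mul, Matrix.mul_neg, neg_add_eq_sub]
  rw [Matrix.mul_add, Matrix.add_mul, Matrix.mul_one, Matrix.one_mul, cross]
  abel

theorem transfer_allPass_of_lyapunov [StarRing R] {F Θ : Matrix n n R} {G : Matrix n m R}
    {H : Matrix m n R} (hΘ : Θ.IsHermitian) (hRic : F * Θ + Θ * Fᴴ + G * Gᴴ = 0)
    (hG : G = -(Θ * Hᴴ)) {s : R} (hN : IsUnit (s • 1 - F)) (hX : IsUnit ((-star s) • 1 - F)) :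
    (H * ((-star s) • 1 - F)⁻¹ * G + 1)ᴴ * (H * (s • 1 - F)⁻¹ * G + 1) = 1 ∧
      (H * (s • 1 - F)⁻¹ * G + 1) * (H * ((-star s) • 1 - F)⁻¹ * G + 1)ᴴ = 1 := by
  have hXH : ((-star s) • 1 - F)ᴴ = (-s) • 1 - Fᴴ := by
    rw [conjTranspose_smul_one_sub, star_neg, star_star]
  have hΓH : (H * ((-star s) • 1 - F)⁻¹ * G + 1)ᴴ = Gᴴ * ((-s) • 1 - Fᴴ)⁻¹ * Hᴴ + 1 := by
    rw [conjTranspose_add, conjTranspose_one, conjTranspose_mul, conjTranspose_mul,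
      conjTranspose_nonsing_inv, hXH, Matrix.mul_assoc]
  have hHΘ : H * Θ = -Gᴴ := by
    rw [hG, conjTranspose_neg, conjTranspose_mul, conjTranspose_conjTranspose, hΘ.eq, neg_neg]
  have h := mul_add_one_mul_add_one_eq_one hN (hXH ▸ hX.star)
    (eq_smul_one_sub_mul_add_mul_neg_smul_one_sub hRic s) hHΘ (by rw [hG, neg_neg])
  rw [hΓH]
  exact ⟨mul_eq_one_comm.mp h, h⟩

end Matrix

/-- if `(F, G, H, I)` satisfies the annihilation-operator physical
realizability equations `FΘ + ΘF† + GG† = 0` and `G = −ΘH†` for some Hermitian positive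
definite `Θ`, then its transfer function `Γ(s) = H(sI − F)⁻¹G + I` is all-pass wherever it
is defined: `Γ(−conj(s))†Γ(s) = I` and `Γ(s)Γ(−conj(s))† = I`; in particular
`Γ(iω)†Γ(iω) = I` and `Γ(iω)Γ(iω)† = I` for every real `ω` where `iωI − F` is invertible. -/
theorem annihilation_transfer_lossless
    (n m : ℕ)
    (F : Matrix (Fin n) (Fin n) ℂ)
    (G : Matrix (Fin n) (Fin m) ℂ)
    (H : Matrix (Fin m) (Fin n) ℂ)
    (Θ : Matrix (Fin n) (Fin n) ℂ)
    (hΘ : Θ.PosDef)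
    (hRic : F * Θ + Θ * Fᴴ + G * Gᴴ = 0)
    (hG : G = -(Θ * Hᴴ)) :
    (∀ s : ℂ,
      IsUnit (s • (1 : Matrix (Fin n) (Fin n) ℂ) - F) →
      IsUnit ((-(starRingEnd ℂ) s) • (1 : Matrix (Fin n) (Fin n) ℂ) - F) →
      (H * ((-(starRingEnd ℂ) s) • (1 : Matrix (Fin n) (Fin n) ℂ) - F)⁻¹ * G + 1)ᴴ *
        (H * (s • (1 : Matrix (Fin n) (Fin n) ℂ) - F)⁻¹ * G + 1) = 1 ∧
      (H * (s • (1 : Matrix (Fin n) (Fin n) ℂ) - F)⁻¹ * G + 1) *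
        (H * ((-(starRingEnd ℂ) s) • (1 : Matrix (Fin n) (Fin n) ℂ) - F)⁻¹ * G + 1)ᴴ = 1) ∧
    (∀ ω : ℝ,
      IsUnit ((Complex.I * (ω : ℂ)) • (1 : Matrix (Fin n) (Fin n) ℂ) - F) →
      (H * ((Complex.I * (ω : ℂ)) • (1 : Matrix (Fin n) (Fin n) ℂ) - F)⁻¹ * G + 1)ᴴ *
        (H * ((Complex.I * (ω : ℂ)) • (1 : Matrix (Fin n) (Fin n) ℂ) - F)⁻¹ * G + 1) = 1 ∧
      (H * ((Complex.I * (ω : ℂ)) • (1 : Matrix (Fin n) (Fin n) ℂ) - F)⁻¹ * G + 1) *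
        (H * ((Complex.I * (ω : ℂ)) • (1 : Matrix (Fin n) (Fin n) ℂ) - F)⁻¹ * G + 1)ᴴ = 1) := by
  simp only [starRingEnd_apply]
  refine ⟨fun s => transfer_allPass_of_lyapunov hΘ.isHermitian hRic hG, fun ω hω => ?_⟩
  have himag : -star (Complex.I * (ω : ℂ)) = Complex.I * (ω : ℂ) := by simp
  simpa only [himag] using
    transfer_allPass_of_lyapunov hΘ.isHermitian hRic hG hω (by rwa [himag])
end

section
/- Let F_c ∈ ℂ^{n_c×n_c}, H_{c1}, H_{c2} ∈ ℂ^{m×n_c}, G_{cy1}, G_{cy2} ∈ ℂ^{n_c×p}, and let Θ ∈ ℂ^{n_c×n_c} be Hermitian. Then there exist matrices G_{cw1b}, G_{cw2b} ∈ ℂ^{n_c×n_c} such that F_cΘ + ΘF_c† − Θ(H_{c2}†H_{c2} − H_{c1}†H_{c1})Θ + G_{cy1}G_{cy1}† − G_{cy2}G_{cy2}† + G_{cw1b}G_{cw1b}† − G_{cw2b}G_{cw2b}† = 0. That is, for any choice of controller dynamics matrices (F_c, G_{cy}, H_c) and any Hermitian commutation matrix Θ, the physical realizability Riccati equation can always be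 satisfied by adding suitable controller noise input matrices. -/
open Matrix

theorem IsSelfAdjoint.exists_eq_mul_star_sub_mul_star {R : Type*} [Ring R] [StarRing R]
    [Algebra ℝ R] [StarModule ℝ R] {a : R} (ha : IsSelfAdjoint a) :
    ∃ b c : R, b * star b - c * star c = a := by
  refine ⟨(2⁻¹ : ℝ) • (a + 1), (2⁻¹ : ℝ) • (a - 1), ?_⟩
  have polarization : (a + 1) * (a + 1) - (a - 1) * (a - 1) = (4 : ℝ) • a := by
    rw [ofNat_smul_eq_nsmul ℝ 4]; noncomm_ring
  simp only [star_smul, star_add, star_sub, star_one, ha.star_eq, star_trivial, smul_mul_smul,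
    ← smul_sub, polarization, smul_smul]
  norm_num

/-- for any controller dynamics matrices `(F_c, G_cy, H_c)` and any Hermitian
commutation matrix `Θ`, the physical realizability Riccati equation can always be satisfied
by adding suitable controller noise input matrices `G_{cw1b}, G_{cw2b}`. -/
theorem controller_noises_make_physically_realizable
    (nc m p : ℕ)
    (Fc : Matrix (Fin nc) (Fin nc) ℂ)
    (Hc1 Hc2 : Matrix (Fin m) (Fin nc) ℂ)
    (Gcy1 Gcy2 : Matrix (Fin nc) (Fin p) ℂ)
    (Θ : Matrix (Fin nc) (Fin nc) ℂ)
    (hΘ : Θ.IsHermitian) :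
    ∃ Gcw1b Gcw2b : Matrix (Fin nc) (Fin nc) ℂ,
      Fc * Θ + Θ * Fcᴴ - Θ * (Hc2ᴴ * Hc2 - Hc1ᴴ * Hc1) * Θ +
        Gcy1 * Gcy1ᴴ - Gcy2 * Gcy2ᴴ +
        Gcw1b * Gcw1bᴴ - Gcw2b * Gcw2bᴴ = 0 := by
  set riccati := Fc * Θ + Θ * Fcᴴ - Θ * (Hc2ᴴ * Hc2 - Hc1ᴴ * Hc1) * Θ +
    Gcy1 * Gcy1ᴴ - Gcy2 * Gcy2ᴴ
  have riccati_hermitian : IsSelfAdjoint riccati := by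
    simp only [IsSelfAdjoint, riccati, star_eq_conjTranspose, conjTranspose_add,
      conjTranspose_sub, conjTranspose_mul, conjTranspose_conjTranspose, hΘ.eq]
    noncomm_ring
  obtain ⟨A, B, hAB⟩ := riccati_hermitian.neg.exists_eq_mul_star_sub_mul_star
  refine ⟨A, B, ?_⟩
  rw [add_sub_assoc, ← star_eq_conjTranspose, ← star_eq_conjTranspose, hAB, add_neg_cancel]
end
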